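/- Let m₁, m₂ > 0 be real numbers. For q ∈ ℝ³ ∖ {0} and p ∈ ℝ³, set U = 1 + 4m₂/|q|, H(q,p) = m₁ U⁻¹ ( √(1 + U |p|²/m₁²) + 1 ), and define the shifted dimensionless Hamiltonian h(q,p) = H(q,p)/m₁ − 2 (subtracting the rest-mass energy). Then h satisfies h + h²/2 = |p|²/(2m₁²) − (8 m₂/|q|) · ( 1 + h + h²/4 ) at every point. In other words, h satisfies the implicit Kepler-type relation f(h) = |p|²/(2m₁²) − g(h)·(8m₂)/|q| with f(x) = x + x²/2 and g(x) = 1 + x + x²/4. -/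

import Mathlib

noncomputable section

/-- Squared Euclidean norm on `ℝ³`. -/
def normSq (v : Fin 3 → ℝ) : ℝ := ∑ i, v i ^ 2

/-- Euclidean norm on `ℝ³`. -/
def nrm (v : Fin 3 → ℝ) : ℝ := Real.sqrt (normSq v)

/-- The harmonic function `U = 1 + 4m₂/|q|` of the extremal Einstein–Maxwell-dilaton metric
with dilaton coupling `a = √3`. -/
def Uharm (m₂ : ℝ) (q : Fin 3 → ℝ) : ℝ := 1 + 4 * m₂ / nrm q

/-- The test-mass Hamiltonian `H = m₁ U⁻¹(√(1 + U|p|²/m₁²) + 1)` of a test particle of mass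
`m₁` around an extremal Einstein–Maxwell-dilaton black hole of mass `m₂`, dilaton coupling
`a = √3`. -/
def HamTM (m₁ m₂ : ℝ) (q p : Fin 3 → ℝ) : ℝ :=
  m₁ * (Uharm m₂ q)⁻¹ * (Real.sqrt (1 + Uharm m₂ q * normSq p / m₁ ^ 2) + 1)

/-- The shifted dimensionless Hamiltonian `h = H/m₁ − 2` (rest-mass energy subtracted). -/
def hShift (m₁ m₂ : ℝ) (q p : Fin 3 → ℝ) : ℝ := HamTM m₁ m₂ q p / m₁ - 2

lemma normSq_nonneg (v : Fin 3 → ℝ) : 0 ≤ normSq v :=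
  Finset.sum_nonneg fun i _ => sq_nonneg _

lemma nrm_pos {v : Fin 3 → ℝ} (hv : v ≠ 0) : 0 < nrm v := by
  apply Real.sqrt_pos.mpr
  rcases Function.ne_iff.mp hv with ⟨i, hi⟩
  exact Finset.sum_pos' (fun j _ => sq_nonneg _) ⟨i, Finset.mem_univ i, by
    have hi' : v i ≠ 0 := by simpa using hi
    exact sq_pos_of_ne_zero hi'⟩

/-- the shifted dimensionless test-mass Hamiltonian `h = H/m₁ − 2` satisfies the
implicit Kepler-type relation `f(h) = |p|²/(2m₁²) − g(h)·(8m₂)/|q|` with `f(x) = x + x²/2` and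
`g(x) = 1 + x + x²/4`. -/
theorem extremal_EMD_shifted_implicit_relation
    (m₁ m₂ : ℝ) (hm₁ : 0 < m₁) (hm₂ : 0 < m₂)
    (q p : Fin 3 → ℝ) (hq : q ≠ 0) :
    hShift m₁ m₂ q p + (hShift m₁ m₂ q p) ^ 2 / 2
      = normSq p / (2 * m₁ ^ 2)
        - (8 * m₂ / nrm q)
          * (1 + hShift m₁ m₂ q p + (hShift m₁ m₂ q p) ^ 2 / 4) := by
  have hr : 0 < nrm q := nrm_pos hq
  have hP : 0 ≤ normSq p := normSq_nonneg p
  have hU : 0 < Uharm m₂ q := by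
    unfold Uharm; positivity
  have harg : 0 ≤ 1 + Uharm m₂ q * normSq p / m₁ ^ 2 := by positivity
  have hs2 : Real.sqrt (1 + Uharm m₂ q * normSq p / m₁ ^ 2) ^ 2
      = 1 + Uharm m₂ q * normSq p / m₁ ^ 2 := Real.sq_sqrt harg
  have hUr : 4 * m₂ / nrm q = Uharm m₂ q - 1 := by unfold Uharm; ring
  have h8 : 8 * m₂ / nrm q = 2 * (Uharm m₂ q - 1) := by
    rw [← hUr]; ring
  set s := Real.sqrt (1 + Uharm m₂ q * normSq p / m₁ ^ 2) with hs
  set U := Uharm m₂ q with hUdef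
  have hx : hShift m₁ m₂ q p = (s + 1) / U - 2 := by
    unfold hShift HamTM
    rw [← hs, ← hUdef]
    field_simp
  have key : U * ((s + 1) / U) ^ 2 / 2 - (s + 1) / U = normSq p / (2 * m₁ ^ 2) := by
    have h1 : U ≠ 0 := hU.ne'
    have h2 : m₁ ≠ 0 := hm₁.ne'
    have e1 : U * ((s + 1) / U) ^ 2 / 2 - (s + 1) / U = (s ^ 2 - 1) / (2 * U) := by
      field_simp
      ring
    rw [e1, hs2]
    field_simp
    ring
  rw [hx, h8]
  linear_combination key

end
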